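/- For all real x with 0 < x < 1/2 and all real y with 0 < y ≤ 1, the double series Σ_{n≥0} Σ_{m≥0} a(n,m)·x^n·y^m converges absolutely and satisfies the kernel equation (1 − x(y + y^{−1})) · Σ_{n≥0} Σ_{m≥0} a(n,m)·x^n·y^m = 1 − (x/y) · Σ_{n≥0} a(n,0)·x^n. -/

import Mathlib

/-!
With `Tₙ(y) = Σₘ a(n,m) yᵐ`, the recursion for `a` gives
`y Tₙ₊₁(y) = (1 + y²) Tₙ(y) - a(n,0)`, the correction term coming from the missing step
below height `0`. Multiplying by `xⁿ⁺¹` and summing over `n` gives the kernel equation.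
Absolute convergence follows from `a(n,m) ≤ 2ⁿ` and `a(n,m) = 0` for `m > n`.
-/

open Filter Real

/-- `aa n m` = number of length-`n` paths on `ℤ≥0` with steps `±1` starting at `0`
and ending at `m`. -/
def aa : ℕ → ℕ → ℕ
  | 0, m => if m = 0 then 1 else 0
  | n+1, m => aa n (m+1) + (if m = 0 then 0 else aa n (m-1))

/-- `aSum n = Σ_{m=0}^n aa n m`. -/
def aSum (n : ℕ) : ℕ := ∑ m ∈ Finset.range (n+1), aa n m

/-- The modular variant `b(n,m)` depending on `ℓ`:
`b(n,m) = a(n,m)` if `m ≡ ℓ-1 (mod ℓ)`; otherwise `b(0,m) = δ_{m,0}`, and for `n ≥ 1`,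
`b(n,m) = b(n-1,m-1) + b(n-1,m+1)` if `m % ℓ < ℓ-2` (negative-index terms are `0`),
and `b(n,m) = b(n-1,m-1)` if `m ≡ ℓ-2 (mod ℓ)`. -/
def bb (ℓ : ℕ) : ℕ → ℕ → ℕ
  | 0, m => if m % ℓ = ℓ - 1 then aa 0 m else if m = 0 then 1 else 0
  | n+1, m =>
    if m % ℓ = ℓ - 1 then aa (n+1) m
    else if m % ℓ = ℓ - 2 then (if m = 0 then 0 else bb ℓ n (m-1))
    else (if m = 0 then 0 else bb ℓ n (m-1)) + bb ℓ n (m+1)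

/-- `bSum ℓ n = Σ_{m=0}^n bb ℓ n m`. -/
def bSum (ℓ : ℕ) (n : ℕ) : ℕ := ∑ m ∈ Finset.range (n+1), bb ℓ n m

/-- `cc ℓ n r = Σ_{m ≥ 0, m ≡ r (mod ℓ)} aa n m` (finite since `aa n m = 0` for `m > n`). -/
def cc (ℓ : ℕ) (n r : ℕ) : ℕ :=
  ∑ m ∈ Finset.range (n+1), if m % ℓ = r then aa n m else 0

/-- `ww ℓ n = Σ_{0 ≤ m ≤ n, m ≡ ℓ-1 (mod ℓ)} bb ℓ n m`. -/
def ww (ℓ : ℕ) (n : ℕ) : ℕ :=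
  ∑ m ∈ Finset.range (n+1), if m % ℓ = ℓ - 1 then bb ℓ n m else 0

open Finset

lemma aa_eq_zero_of_lt {n m : ℕ} (h : n < m) : aa n m = 0 := by
  induction n generalizing m with
  | zero => simp [aa]; omega
  | succ n ih => rw [aa, ih (by omega), if_neg (by omega), ih (by omega)]

lemma aa_le_two_pow (n m : ℕ) : aa n m ≤ 2 ^ n := by
  induction n generalizing m with
  | zero => simp only [aa]; split <;> simp
  | succ n ih =>
    rw [aa, pow_succ, mul_two]
    gcongr
    · exact ih _
    · split
      · exact Nat.zero_le _
      · exact ih _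

section RowSum

variable {R : Type*} [CommRing R]

def aaRowSum (y : R) (n : ℕ) : R := ∑ m ∈ range (n + 1), (aa n m : R) * y ^ m

@[simp]
lemma aaRowSum_zero (y : R) : aaRowSum y 0 = 1 := by simp [aaRowSum, aa]

lemma mul_aaRowSum_succ (y : R) (n : ℕ) :
    y * aaRowSum y (n + 1) = (1 + y ^ 2) * aaRowSum y n - aa n 0 := by
  have hdown : ∑ m ∈ range (n + 2), (aa n (m + 1) : R) * y ^ (m + 1) =
      aaRowSum y n - aa n 0 := by
    have h := sum_range_succ' (fun m => (aa n m : R) * y ^ m) (n + 2)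
    rw [sum_range_succ, sum_range_succ, aa_eq_zero_of_lt (by omega : n < n + 2),
      aa_eq_zero_of_lt (by omega : n < n + 1)] at h
    simp only [aaRowSum, Nat.cast_zero, zero_mul, add_zero, pow_zero, mul_one] at h ⊢
    rw [h, add_sub_cancel_right]
  have hup : ∑ m ∈ range (n + 2), (if m = 0 then 0 else (aa n (m - 1) : R)) * y ^ (m + 1) =
      y ^ 2 * aaRowSum y n := by
    rw [sum_range_succ', aaRowSum, mul_sum]
    simp only [Nat.succ_ne_zero, if_false, Nat.add_sub_cancel, if_true, zero_mul, add_zero]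
    exact sum_congr rfl fun m _ => by ring
  calc y * aaRowSum y (n + 1)
      = ∑ m ∈ range (n + 2), ((aa n (m + 1) : R) * y ^ (m + 1) +
          (if m = 0 then 0 else (aa n (m - 1) : R)) * y ^ (m + 1)) := by
        rw [aaRowSum, mul_sum]
        refine sum_congr rfl fun m _ => ?_
        simp only [aa]
        push_cast [apply_ite (Nat.cast : ℕ → R)]
        ring
    _ = (1 + y ^ 2) * aaRowSum y n - aa n 0 := by
        rw [sum_add_distrib, hdown, hup]; ring

end RowSum

lemma aa_mul_pow_mul_pow_le {x y : ℝ} (hx : 0 ≤ x) (hy0 : 0 ≤ y) (hy : y ≤ 1) (n m : ℕ) :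
    (aa n m : ℝ) * x ^ n * y ^ m ≤ (2 * x) ^ n :=
  calc (aa n m : ℝ) * x ^ n * y ^ m ≤ 2 ^ n * x ^ n * 1 := by
        gcongr
        · exact_mod_cast aa_le_two_pow n m
        · exact pow_le_one₀ hy0 hy
    _ = (2 * x) ^ n := by rw [mul_pow, mul_one]

/-- Since `a(n,m) = 0` for `m > n`, the bound `(2x)ⁿ` splits as `√(2x)ⁿ · √(2x)ᵐ`,
which is summable over `ℕ × ℕ`. -/
lemma summable_aa_mul_pow_mul_pow {x y : ℝ} (hx0 : 0 ≤ x) (hx : x < 1 / 2) (hy0 : 0 ≤ y)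
    (hy : y ≤ 1) : Summable fun p : ℕ × ℕ => (aa p.1 p.2 : ℝ) * x ^ p.1 * y ^ p.2 := by
  set r := √(2 * x)
  have hr0 : 0 ≤ r := sqrt_nonneg _
  have hr1 : r < 1 := (sqrt_lt' one_pos).2 (by linarith)
  have hrsq : r * r = 2 * x := mul_self_sqrt (by linarith)
  have hgeo : Summable fun n : ℕ => r ^ n := summable_geometric_of_lt_one hr0 hr1
  refine Summable.of_nonneg_of_le (fun p => by positivity) (fun ⟨n, m⟩ => ?_)
    (hgeo.mul_of_nonneg hgeo (fun n => pow_nonneg hr0 n) (fun n => pow_nonneg hr0 n))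
  rcases le_or_gt m n with hmn | hmn
  · calc (aa n m : ℝ) * x ^ n * y ^ m ≤ (2 * x) ^ n := aa_mul_pow_mul_pow_le hx0 hy0 hy n m
      _ = r ^ n * r ^ n := by rw [← hrsq, mul_pow]
      _ ≤ r ^ n * r ^ m := by gcongr r ^ n * ?_; exact pow_le_pow_of_le_one hr0 hr1.le hmn
  · simp only [aa_eq_zero_of_lt hmn, Nat.cast_zero, zero_mul]
    positivity

lemma tsum_aa_mul_pow_mul_pow_eq_tsum_aaRowSum {x y : ℝ} (hx0 : 0 ≤ x) (hx : x < 1 / 2)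
    (hy0 : 0 ≤ y) (hy : y ≤ 1) :
    Summable (fun n => x ^ n * aaRowSum y n) ∧
      ∑' p : ℕ × ℕ, (aa p.1 p.2 : ℝ) * x ^ p.1 * y ^ p.2 = ∑' n, x ^ n * aaRowSum y n := by
  have hsum := summable_aa_mul_pow_mul_pow hx0 hx hy0 hy
  have hrow (n : ℕ) : ∑' m, (aa n m : ℝ) * x ^ n * y ^ m = x ^ n * aaRowSum y n := by
    rw [tsum_eq_sum (s := range (n + 1)) fun m hm => by
      rw [aa_eq_zero_of_lt (by simpa using hm), Nat.cast_zero, zero_mul, zero_mul]]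
    simp only [aaRowSum, mul_sum]
    exact sum_congr rfl fun m _ => by ring
  have hrows := (summable_prod_of_nonneg fun p => by positivity).1 hsum
  exact ⟨hrows.2.congr hrow, (hsum.tsum_prod' hrows.1).trans (tsum_congr hrow)⟩

lemma summable_aa_zero_mul_pow {x : ℝ} (hx0 : 0 ≤ x) (hx : x < 1 / 2) :
    Summable fun n => (aa n 0 : ℝ) * x ^ n := by
  refine Summable.of_nonneg_of_le (fun n => by positivity) (fun n => ?_)
    (summable_geometric_of_lt_one (by linarith) (by linarith) : Summable fun n => (2 * x) ^ n)
  simpa using aa_mul_pow_mul_pow_le hx0 zero_le_one le_rfl n 0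

lemma mul_tsum_eq_of_rec {t a : ℕ → ℝ} {x y : ℝ} (ht : Summable fun n => x ^ n * t n)
    (ha : Summable fun n => a n * x ^ n) (ht0 : t 0 = 1)
    (hrec : ∀ n, y * t (n + 1) = (1 + y ^ 2) * t n - a n) :
    y * ∑' n, x ^ n * t n = y + x * (1 + y ^ 2) * ∑' n, x ^ n * t n - x * ∑' n, a n * x ^ n := by
  have htail : y * ∑' n, x ^ (n + 1) * t (n + 1) =
      x * (1 + y ^ 2) * ∑' n, x ^ n * t n - x * ∑' n, a n * x ^ n := by
    rw [← tsum_mul_left, ← tsum_mul_left, ← tsum_mul_left, ← (ht.mul_left _).tsum_sub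
      (ha.mul_left x)]
    refine tsum_congr fun n => ?_
    linear_combination x ^ (n + 1) * hrec n
  have hhead : ∑' n, x ^ n * t n = 1 + ∑' n, x ^ (n + 1) * t (n + 1) := by
    rw [ht.tsum_eq_zero_add, ht0, pow_zero, one_mul]
  linear_combination y * hhead + htail

/-- Kernel equation: for `0 < x < 1/2` and `0 < y ≤ 1`, the double series converges
absolutely and `(1 − x(y+y⁻¹))·Σ_{n,m} a(n,m)xⁿyᵐ = 1 − (x/y)·Σ_n a(n,0)xⁿ`. -/
theorem stmt13 (x y : ℝ) (hx0 : 0 < x) (hx : x < 1/2) (hy0 : 0 < y) (hy : y ≤ 1) :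
    Summable (fun p : ℕ × ℕ => (aa p.1 p.2 : ℝ) * x ^ p.1 * y ^ p.2) ∧
    (1 - x * (y + y⁻¹)) * ∑' p : ℕ × ℕ, (aa p.1 p.2 : ℝ) * x ^ p.1 * y ^ p.2 =
      1 - (x / y) * ∑' n : ℕ, (aa n 0 : ℝ) * x ^ n := by
  refine ⟨summable_aa_mul_pow_mul_pow hx0.le hx hy0.le hy, ?_⟩
  obtain ⟨hrows, hprod⟩ := tsum_aa_mul_pow_mul_pow_eq_tsum_aaRowSum hx0.le hx hy0.le hy
  have key := mul_tsum_eq_of_rec hrows (summable_aa_zero_mul_pow hx0.le hx)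
    (aaRowSum_zero y) (mul_aaRowSum_succ y)
  rw [hprod]
  field_simp
  linear_combination key
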